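/- Fix $t > 0$ and let $R(\phi)(s) = \phi_{t-s} - \phi_t$. For every continuous $\phi : [0,t]\to\mathbb{R}$ with $\phi_0 = 0$, the transformation $\mathcal{T}(\phi)(s) = \phi_s - \log\{1 + \frac{A_s(\phi)}{A_t(\phi)}(e^{2\phi_t}-1)\}$ commutes with time reversal: $R(\mathcal{T}(\phi)) = \mathcal{T}(R(\phi))$. -/
import Mathlib

/-- The exponential additive functional. -/
noncomputable def A (φ : ℝ → ℝ) (s : ℝ) : ℝ := ∫ u in (0:ℝ)..s, Real.exp (2 * φ u)

/-- The transformation `𝒯` on paths over `[0,t]`. -/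
noncomputable def T (t : ℝ) (φ : ℝ → ℝ) (s : ℝ) : ℝ :=
  φ s - Real.log (1 + A φ s / A φ t * (Real.exp (2 * φ t) - 1))

/-- The time-reversal operator on paths over `[0,t]`. -/
noncomputable def R (t : ℝ) (φ : ℝ → ℝ) (s : ℝ) : ℝ := φ (t - s) - φ t

theorem stmt14 (t : ℝ) (ht : 0 < t) (φ : ℝ → ℝ)
    (hφ : ContinuousOn φ (Set.Icc 0 t)) (hφ0 : φ 0 = 0) :
    ∀ s ∈ Set.Icc (0:ℝ) t, R t (T t φ) s = T t (R t φ) s := by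
  have hint : ∀ a b : ℝ, a ∈ Set.Icc 0 t → b ∈ Set.Icc 0 t →
      IntervalIntegrable (fun u => Real.exp (2 * φ u)) MeasureTheory.volume a b := by
    intro a b ha hb
    apply ContinuousOn.intervalIntegrable
    apply (Real.continuous_exp.comp_continuousOn (continuousOn_const.mul hφ)).mono
    have h := Set.uIcc_subset_uIcc
      (by rw [Set.uIcc_of_le ht.le]; exact ha) (by rw [Set.uIcc_of_le ht.le]; exact hb)
    rwa [Set.uIcc_of_le ht.le] at h
  have h0t : (0:ℝ) ∈ Set.Icc (0:ℝ) t := ⟨le_refl _, ht.le⟩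
  have htt : t ∈ Set.Icc (0:ℝ) t := ⟨ht.le, le_refl _⟩
  have hA0 : A φ 0 = 0 := by simp [A]
  have hBpos : 0 < A φ t := by
    exact intervalIntegral.intervalIntegral_pos_of_pos_on (hint 0 t h0t htt)
      (fun x _ => Real.exp_pos _) ht
  intro s hs
  obtain ⟨hs0, hst⟩ := hs
  have hts : t - s ∈ Set.Icc (0:ℝ) t := ⟨by linarith, by linarith⟩
  have hsplit : A φ (t - s) + ∫ u in (t-s)..t, Real.exp (2 * φ u) = A φ t :=
    intervalIntegral.integral_add_adjacent_intervals (hint 0 (t-s) h0t hts)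
      (hint (t-s) t hts htt)
  have hxnn : 0 ≤ A φ (t - s) :=
    intervalIntegral.integral_nonneg (by linarith) (fun u _ => (Real.exp_pos _).le)
  have hxle : A φ (t - s) ≤ A φ t := by
    have : 0 ≤ ∫ u in (t-s)..t, Real.exp (2 * φ u) :=
      intervalIntegral.integral_nonneg (by linarith) (fun u _ => (Real.exp_pos _).le)
    linarith
  -- key: A of reversed path
  have key : ∀ s' : ℝ, s' ∈ Set.Icc 0 t →
      A (R t φ) s' = Real.exp (-(2 * φ t)) * (A φ t - A φ (t - s')) := by
    intro s' hs'
    have hts' : t - s' ∈ Set.Icc (0:ℝ) t := ⟨by linarith [hs'.2], by linarith [hs'.1]⟩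
    have h1 : A (R t φ) s'
        = ∫ u in (0:ℝ)..s', Real.exp (-(2 * φ t)) * Real.exp (2 * φ (t - u)) := by
      unfold A R
      congr 1
      ext u
      rw [← Real.exp_add]
      ring_nf
    rw [h1, intervalIntegral.integral_const_mul]
    congr 1
    have h2 : (∫ u in (0:ℝ)..s', Real.exp (2 * φ (t - u)))
        = ∫ u in (t - s')..(t - 0), Real.exp (2 * φ u) :=
      intervalIntegral.integral_comp_sub_left (fun u => Real.exp (2 * φ u)) t
    rw [h2]
    have hsplit' : A φ (t - s') + ∫ u in (t-s')..t, Real.exp (2 * φ u) = A φ t :=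
      intervalIntegral.integral_add_adjacent_intervals (hint 0 (t-s') h0t hts')
        (hint (t-s') t hts' htt)
    simp only [sub_zero]
    linarith
  have keyS := key s ⟨hs0, hst⟩
  have keyT := key t htt
  rw [show t - t = (0:ℝ) by ring, hA0, sub_zero] at keyT
  set c := φ t with hc
  set x := A φ (t - s) with hx
  set B := A φ t with hB
  have hE : (0:ℝ) < Real.exp (2 * c) := Real.exp_pos _
  have hEne : Real.exp (-(2 * c)) ≠ 0 := (Real.exp_pos _).ne'
  have hr0 : 0 ≤ x / B := div_nonneg hxnn hBpos.le
  have hr1 : x / B ≤ 1 := (div_le_one hBpos).mpr hxle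
  have hXpos : 0 < 1 + x / B * (Real.exp (2 * c) - 1) := by
    rcases eq_or_lt_of_le hr1 with h | h
    · rw [h]; linarith
    · nlinarith [mul_nonneg hr0 hE.le]
  -- the algebraic identity
  have halg : 1 + (B - x) / B * (Real.exp (-(2 * c)) - 1)
      = (1 + x / B * (Real.exp (2 * c) - 1)) * Real.exp (-(2 * c)) := by
    have hEE : Real.exp (-(2 * c)) * Real.exp (2 * c) = 1 := by
      rw [← Real.exp_add]; simp
    field_simp
    nlinarith [hEE]
  have e1 : R t (T t φ) s = T t φ (t - s) - T t φ t := rfl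
  rw [e1]
  unfold T
  rw [keyS, keyT]
  have e2 : R t φ s = φ (t - s) - c := rfl
  have e3 : R t φ t = -c := by simp [R, hφ0, hc]
  rw [e2, e3]
  rw [div_self hBpos.ne']
  rw [show (1:ℝ) + 1 * (Real.exp (2*c) - 1) = Real.exp (2*c) by ring, Real.log_exp]
  rw [show Real.exp (-(2*c)) * (B - x) / (Real.exp (-(2*c)) * B) = (B - x) / B from
    mul_div_mul_left _ _ hEne]
  rw [show (2:ℝ) * -c = -(2*c) by ring, halg, Real.log_mul hXpos.ne' hEne, Real.log_exp]
  ring
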